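/- Under the hypotheses of the affine block-matrix lemma, lim_{μ→∞} M(μ)⁻¹ · [[0,0],[0, μE]] = [[0, −A⁻¹B],[0, I]]. -/

import Mathlib

/-!
Block elimination on `M(μ)` gives
`M(μ)⁻¹ * [[0, 0], [0, μE]] = [[0, -A⁻¹B T(μ)], [0, T(μ)]]` with `T(μ) = S(μ)⁻¹ (μE)`,
where `S(μ) = C + μE` and `C = D - BᵀA⁻¹B`. Rescaling, `T(μ) = (μ⁻¹C + E)⁻¹ E`, and since
`μ⁻¹C + E → E` with `E` invertible, continuity of the matrix inverse gives `T(μ) → E⁻¹E = 1`.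
-/

open Matrix Filter Topology

namespace Matrix

variable {l m n p : Type*} [Fintype m] [Fintype n] [DecidableEq m] [DecidableEq n]

theorem inv_fromBlocks_mul_fromBlocks_zero_zero_zero {α : Type*} [CommRing α]
    {A : Matrix m m α} {B : Matrix m n α} {C : Matrix n m α} {D : Matrix n n α}
    (hA : IsUnit A.det) (hS : IsUnit (D - C * A⁻¹ * B).det) (F : Matrix n p α) :
    (fromBlocks A B C D)⁻¹ * fromBlocks (0 : Matrix m l α) 0 0 F =
      fromBlocks 0 (-(A⁻¹ * B) * ((D - C * A⁻¹ * B)⁻¹ * F)) 0 ((D - C * A⁻¹ * B)⁻¹ * F) := by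
  let := A.invertibleOfIsUnitDet hA
  have hS' : IsUnit (D - C * ⅟A * B).det := by rwa [invOf_eq_nonsing_inv]
  let := (D - C * ⅟A * B).invertibleOfIsUnitDet hS'
  let := (fromBlocks A B C D).invertibleOfIsUnitDet
    (by rw [det_fromBlocks₁₁]; exact hA.mul hS')
  rw [← invOf_eq_nonsing_inv (fromBlocks A B C D), invOf_fromBlocks₁₁_eq, fromBlocks_multiply]
  simp only [invOf_eq_nonsing_inv, Matrix.mul_zero, add_zero, zero_add,
    Matrix.neg_mul, Matrix.mul_assoc]

theorem inv_smul_of_ne_zero {K : Type*} [Field K] (A : Matrix n n K) {c : K} (hc : c ≠ 0) :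
    (c • A)⁻¹ = c⁻¹ • A⁻¹ := by
  by_cases hA : IsUnit A.det
  · exact inv_smul' A (Units.mk0 c hc) hA
  · have hcA : ¬IsUnit (c • A).det := by
      rw [det_smul, isUnit_iff_ne_zero, mul_ne_zero_iff, not_and_or]
      exact Or.inr (by rwa [isUnit_iff_ne_zero] at hA)
    rw [nonsing_inv_apply_not_isUnit _ hA, nonsing_inv_apply_not_isUnit _ hcA, smul_zero]

theorem inv_add_smul_mul_smul {K : Type*} [Field K] (C E : Matrix n n K) {c : K} (hc : c ≠ 0) :
    (C + c • E)⁻¹ * (c • E) = (c⁻¹ • C + E)⁻¹ * E := by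
  have hrescale : c⁻¹ • C + E = c⁻¹ • (C + c • E) := by
    rw [smul_add, smul_smul, inv_mul_cancel₀ hc, one_smul]
  rw [hrescale, inv_smul_of_ne_zero _ (inv_ne_zero hc), inv_inv, Matrix.smul_mul,
    Matrix.mul_smul]

theorem tendsto_inv_mul_of_tendsto {ι K : Type*} [Field K] [TopologicalSpace K]
    [IsTopologicalDivisionRing K] {f : Filter ι} {X : ι → Matrix n n K} {E : Matrix n n K}
    (hX : Tendsto X f (𝓝 E)) (hE : IsUnit E.det) :
    Tendsto (fun i => (X i)⁻¹ * E) f (𝓝 1) := by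
  have hinv : ContinuousAt Inv.inv E :=
    continuousAt_matrix_inv E (by rw [Ring.inverse_eq_inv']; exact continuousAt_inv₀ hE.ne_zero)
  rw [← nonsing_inv_mul E hE]
  exact (hinv.tendsto.comp hX).mul_const E

end Matrix

theorem tendsto_ofReal_inv_smul_add_atTop {X : Type*} [TopologicalSpace X] [AddCommMonoid X]
    [Module ℂ X] [ContinuousSMul ℂ X] [ContinuousAdd X] (C E : X) :
    Tendsto (fun μ : ℝ => (μ : ℂ)⁻¹ • C + E) atTop (𝓝 E) := by
  have hinv : Tendsto (fun μ : ℝ => (μ : ℂ)⁻¹) atTop (𝓝 0) := by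
    simpa only [Function.comp_def, Complex.ofReal_inv, Complex.ofReal_zero] using
      (Complex.continuous_ofReal.tendsto 0).comp tendsto_inv_atTop_zero
  simpa only [zero_smul, zero_add] using (hinv.smul_const C).add_const E

theorem block_matrix_asymptotic_inverse_mul (n m : ℕ)
    (A : Matrix (Fin n) (Fin n) ℂ) (B : Matrix (Fin n) (Fin m) ℂ)
    (D E : Matrix (Fin m) (Fin m) ℂ)
    (hA : IsUnit A.det) (hE : IsUnit E.det)
    (M : ℝ → Matrix (Fin n ⊕ Fin m) (Fin n ⊕ Fin m) ℂ)
    (hM : ∀ μ : ℝ, M μ = Matrix.fromBlocks A B Bᵀ (D + (μ : ℂ) • E))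
    (hMinv : ∀ᶠ μ : ℝ in atTop, IsUnit (M μ).det) :
    ∀ i j, Tendsto
      (fun μ : ℝ =>
        ((M μ)⁻¹ * (Matrix.fromBlocks 0 0 0 ((μ : ℂ) • E) :
          Matrix (Fin n ⊕ Fin m) (Fin n ⊕ Fin m) ℂ)) i j) atTop
      (𝓝 ((Matrix.fromBlocks 0 (-(A⁻¹ * B)) 0 1 :
          Matrix (Fin n ⊕ Fin m) (Fin n ⊕ Fin m) ℂ) i j)) := by
  intro i j
  set C := D - Bᵀ * A⁻¹ * B
  set T : ℝ → Matrix (Fin m) (Fin m) ℂ := fun μ => ((μ : ℂ)⁻¹ • C + E)⁻¹ * E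
  have hT : Tendsto T atTop (𝓝 1) :=
    tendsto_inv_mul_of_tendsto (tendsto_ofReal_inv_smul_add_atTop C E) hE
  have hblocks : Continuous fun Y : Matrix (Fin m) (Fin m) ℂ =>
      (fromBlocks 0 (-(A⁻¹ * B) * Y) 0 Y : Matrix (Fin n ⊕ Fin m) (Fin n ⊕ Fin m) ℂ) :=
    continuous_const.matrix_fromBlocks (continuous_const.matrix_mul continuous_id)
      continuous_const continuous_id
  have hlim := (hblocks.tendsto 1).comp hT
  rw [Matrix.mul_one] at hlim
  have heq : (fun μ => fromBlocks 0 (-(A⁻¹ * B) * T μ) 0 (T μ)) =ᶠ[atTop]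
      fun μ : ℝ => (M μ)⁻¹ * fromBlocks 0 0 0 ((μ : ℂ) • E) := by
    filter_upwards [hMinv, eventually_ne_atTop 0] with μ hdet hμ
    have hS : D + (μ : ℂ) • E - Bᵀ * A⁻¹ * B = C + (μ : ℂ) • E :=
      (sub_add_eq_add_sub ..).symm
    let := A.invertibleOfIsUnitDet hA
    rw [hM, det_fromBlocks₁₁, invOf_eq_nonsing_inv] at hdet
    rw [hM, inv_fromBlocks_mul_fromBlocks_zero_zero_zero hA (isUnit_of_mul_isUnit_right hdet),
      hS, inv_add_smul_mul_smul C E (Complex.ofReal_ne_zero.2 hμ)]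
  exact tendsto_pi_nhds.1 (tendsto_pi_nhds.1 (hlim.congr' heq) i) j
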